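/- arXiv:2504.00004 — 3 statements merged into one kernel-verified Lean document; each statement's English description precedes it below -/
import Mathlib

section
/- For every natural number n and every complex number t, ∑_{k=0}^{n} C(n,k) · H_k^{(2)} · t^k = H_n^{(2)} · (1+t)^n − ∑_{k=1}^{n} ((H_n − H_{n−k})/k) · (1+t)^{n−k}. -/
/-!
Writing `u = 1 + t`, both sides vanish at `n = 0` and satisfy the recursion
`X (n+1) = u X n + (∑_{k=1}^{n+1} (u^k - 1)/k) / (n+1)`.
For the left side this comes from Pascal's rule, `H_{k+1}^{(2)} - H_k^{(2)} = 1/(k+1)^2`, the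
absorption identity `C(n,k)/(k+1) = C(n+1,k+1)/(n+1)` and the classical identity
`∑_{k=1}^{N} C(N,k) t^k/k = ∑_{k=1}^{N} (u^k - 1)/k`. For the right side, reindexed as
`H_n^{(2)} u^n - ∑_{j<n} (H_n - H_j)/(n-j) u^j`, it comes from the shift `j ↦ j + 1`, under
which `(H_{n+1} - H_{j+1})/(n-j) = (H_n - H_j)/(n-j) - 1/((n+1)(j+1))`.
-/

open Finset

noncomputable def H : ℕ → ℝ := fun m => ∑ j ∈ range m, (1 : ℝ) / (j + 1)

noncomputable def H2 : ℕ → ℝ := fun m => ∑ j ∈ range m, (1 : ℝ) / ((j : ℝ) + 1) ^ 2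

def harmonic2 (n : ℕ) : ℚ := ∑ i ∈ range n, ((i + 1 : ℚ) ^ 2)⁻¹

lemma harmonic2_succ (n : ℕ) : harmonic2 (n + 1) = harmonic2 n + ((n + 1 : ℚ) ^ 2)⁻¹ :=
  sum_range_succ ..

lemma sum_Icc_one_sub_eq_sum_range {M : Type*} [AddCommMonoid M] (n : ℕ) (f : ℕ → M) :
    ∑ k ∈ Icc 1 n, f (n - k) = ∑ j ∈ range n, f j :=
  sum_nbij' (n - ·) (n - ·) (by simp; omega) (by simp; omega) (by simp; omega) (by simp; omega)
    (fun _ _ => rfl)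

section Field

variable {K : Type*} [Field K] [CharZero K]

lemma choose_div_add_one (n k : ℕ) :
    (n.choose k : K) / (k + 1) = ((n + 1).choose (k + 1) : K) / (n + 1) := by
  rw [div_eq_div_iff (Nat.cast_add_one_ne_zero k) (Nat.cast_add_one_ne_zero n)]
  exact_mod_cast (mul_comm _ _).trans (Nat.add_one_mul_choose_eq n k)

theorem sum_range_choose_mul_pow_succ_div (n : ℕ) (t : K) :
    ∑ k ∈ range (n + 1), (n.choose k : K) * (t ^ (k + 1) / (k + 1)) =
      ((1 + t) ^ (n + 1) - 1) / (n + 1) := by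
  have binomial :
      (1 + t) ^ (n + 1) = ∑ k ∈ range (n + 1), t ^ (k + 1) * (n + 1).choose (k + 1) + 1 := by
    simpa [sum_range_succ', add_comm 1 t] using add_pow t 1 (n + 1)
  rw [binomial, add_sub_cancel_right, sum_div]
  refine sum_congr rfl fun k _ => ?_
  rw [mul_div_left_comm, choose_div_add_one]
  ring

-- The `k = 0` term on the left is `t ^ 0 / 0 = 0`.
theorem sum_range_choose_mul_pow_div (n : ℕ) (t : K) :
    ∑ k ∈ range (n + 1), (n.choose k : K) * (t ^ k / k) =
      ∑ k ∈ range n, ((1 + t) ^ (k + 1) - 1) / (k + 1) := by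
  induction n with
  | zero => simp
  | succ n ih =>
    rw [sum_choose_succ_mul (fun k _ => t ^ k / k), ih]
    push_cast
    rw [sum_range_choose_mul_pow_succ_div, sum_range_succ _ n]

theorem sum_range_choose_mul_pow_succ_div_sq (n : ℕ) (t : K) :
    ∑ k ∈ range (n + 1), (n.choose k : K) * (t ^ (k + 1) / (k + 1) ^ 2) =
      (∑ k ∈ range (n + 1), ((1 + t) ^ (k + 1) - 1) / (k + 1)) / (n + 1) := by
  rw [← sum_range_choose_mul_pow_div, sum_range_succ' _ (n + 1)]
  simp only [Nat.cast_add, Nat.cast_one, Nat.cast_zero, div_zero, mul_zero, add_zero, sum_div]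
  refine sum_congr rfl fun k _ => ?_
  rw [div_eq_mul_inv _ ((n : K) + 1), mul_right_comm, ← div_eq_mul_inv, ← choose_div_add_one]
  field_simp

lemma sum_range_choose_mul_harmonic2_mul_pow_succ (n : ℕ) (t : K) :
    ∑ k ∈ range (n + 2), ((n + 1).choose k : K) * (harmonic2 k * t ^ k) =
      (1 + t) * ∑ k ∈ range (n + 1), (n.choose k : K) * (harmonic2 k * t ^ k) +
        ∑ k ∈ range (n + 1), (n.choose k : K) * (t ^ (k + 1) / (k + 1) ^ 2) := by
  rw [sum_choose_succ_mul (fun k _ => (harmonic2 k : K) * t ^ k), add_mul, one_mul, add_assoc]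
  congr 1
  rw [mul_sum, ← sum_add_distrib]
  refine sum_congr rfl fun k _ => ?_
  push_cast [harmonic2_succ]
  ring

lemma sum_range_harmonic_sub_div_mul_pow_succ (n : ℕ) (u : K) :
    ∑ j ∈ range (n + 1), (harmonic (n + 1) - harmonic j : K) / ((n + 1 : ℕ) - j) * u ^ j =
      u * ∑ j ∈ range n, (harmonic n - harmonic j : K) / (n - j) * u ^ j +
        (harmonic (n + 1) - ∑ j ∈ range n, u ^ (j + 1) / (j + 1)) / (n + 1) := by
  have step : ∀ j ∈ range n,
      (harmonic (n + 1) - harmonic (j + 1) : K) / ((n + 1 : ℕ) - (j + 1 : ℕ)) * u ^ (j + 1) =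
        u * ((harmonic n - harmonic j : K) / (n - j) * u ^ j) -
          u ^ (j + 1) / (j + 1) / (n + 1) := by
    intro j hj
    have hnj : (n : K) - j ≠ 0 := sub_ne_zero.2 (Nat.cast_injective.ne (mem_range.1 hj).ne')
    have hn : (n : K) + 1 ≠ 0 := Nat.cast_add_one_ne_zero n
    have hj : (j : K) + 1 ≠ 0 := Nat.cast_add_one_ne_zero j
    push_cast [harmonic_succ, add_sub_add_right_eq_sub]
    field_simp
    ring
  rw [sum_range_succ', sum_congr rfl step, sum_sub_distrib, ← mul_sum, ← sum_div]
  push_cast [harmonic_zero]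
  ring

theorem sum_range_choose_mul_harmonic2_mul_pow (n : ℕ) (t : K) :
    ∑ k ∈ range (n + 1), (n.choose k : K) * (harmonic2 k * t ^ k) =
      harmonic2 n * (1 + t) ^ n -
        ∑ j ∈ range n, (harmonic n - harmonic j : K) / (n - j) * (1 + t) ^ j := by
  induction n with
  | zero => simp [harmonic2]
  | succ n ih =>
    have harmonic_eq : (harmonic (n + 1) : K) = ∑ j ∈ range (n + 1), ((j : K) + 1)⁻¹ := by
      simp [harmonic]
    rw [sum_range_choose_mul_harmonic2_mul_pow_succ, ih, sum_range_choose_mul_pow_succ_div_sq,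
      sum_range_harmonic_sub_div_mul_pow_succ, harmonic_eq]
    simp only [sub_div, sum_sub_distrib, one_div]
    rw [sum_range_succ (fun k => (1 + t) ^ (k + 1) / ((k : K) + 1)) n]
    push_cast [harmonic2_succ]
    have hn : (n : K) + 1 ≠ 0 := Nat.cast_add_one_ne_zero n
    field_simp
    ring

end Field

lemma H_eq_harmonic (m : ℕ) : (H m : ℂ) = harmonic m := by
  simp [H, harmonic]

lemma H2_eq_harmonic2 (m : ℕ) : (H2 m : ℂ) = harmonic2 m := by
  simp [H2, harmonic2]

theorem stmt_3 (n : ℕ) (t : ℂ) :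
    ∑ k ∈ range (n + 1), (Nat.choose n k : ℂ) * ((H2 k : ℂ)) * t ^ k =
      ((H2 n : ℂ)) * (1 + t) ^ n -
        ∑ k ∈ Icc 1 n, (((H n : ℂ) - (H (n - k) : ℂ)) / (k : ℂ)) * (1 + t) ^ (n - k) := by
  simp only [H_eq_harmonic, H2_eq_harmonic2, mul_assoc]
  rw [sum_range_choose_mul_harmonic2_mul_pow, ← sum_Icc_one_sub_eq_sum_range n
    fun j => (harmonic n - harmonic j : ℂ) / (n - j) * (1 + t) ^ j]
  congr 1
  refine sum_congr rfl fun k hk => ?_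
  rw [Nat.cast_sub (mem_Icc.1 hk).2, sub_sub_cancel]
end

section
/- For every natural number n and every natural number r ≥ 1, ∑_{k=1}^{n} (−1)^{k−1} · (C(n,k)/C(k+r, r)) · H_k = (r/(n+r)) · (H_{n+r} − H_r) + n/(n+r)², as an identity of real numbers. -/
/-!
Since `C(n,k) / C(k+r,r) = C(n+r,k+r) / C(n+r,r)`, Pascal's rule writes the alternating
coefficients as differences `f k - f (k+1)` with `f k = (-1)^k C(n+r-1, r+k) / C(n+r,r)`, and summation
by parts turns `∑ (f k - f (k+1)) H_{k+1}` into `∑ f k / (k+1)`. Absorbing `1/(k+1)` again splits this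
into the two sums `∑ (-1)^k C(n,k+1) / C(k+1+r,r) = n/(n+r)` (a telescoping alternating sum of
binomial coefficients) and `∑ (-1)^k C(n,k+1) / ((k+1) C(k+1+r,r)) = H_{n+r} - H_r` (induction on `n`,
whose increment reduces to the first sum).
-/

open Finset

lemma H_zero : H 0 = 0 := by
  simp [H]

lemma H_succ (m : ℕ) : H (m + 1) = H m + 1 / (m + 1) := by
  simp [H, sum_range_succ]

lemma sum_range_sub_mul_succ {R : Type*} [CommRing R] (f g : ℕ → R) (n : ℕ) :
    ∑ k ∈ range n, (f k - f (k + 1)) * g (k + 1)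
      = ∑ k ∈ range n, f k * (g (k + 1) - g k) + f 0 * g 0 - f n * g n := by
  induction n with
  | zero => simp
  | succ n ih => rw [sum_range_succ, ih, sum_range_succ]; ring

lemma sum_range_neg_one_pow_mul_choose_succ {R : Type*} [CommRing R] (M s t : ℕ) :
    ∑ k ∈ range t, (-1 : R) ^ k * (M + 1).choose (s + k + 1)
      = M.choose s - (-1) ^ t * M.choose (s + t) := by
  have telescope : ∀ k, (-1 : R) ^ k * (M + 1).choose (s + k + 1)
      = (-1) ^ k * M.choose (s + k) - (-1) ^ (k + 1) * M.choose (s + (k + 1)) := by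
    intro k
    rw [Nat.choose_succ_succ', ← add_assoc]
    push_cast
    ring
  simp only [telescope, sum_range_sub', pow_zero, one_mul, add_zero]

section Field

variable {K : Type*} [Field K] [CharZero K]

lemma choose_div_choose_add {n k : ℕ} (hk : k ≤ n) (r : ℕ) :
    (n.choose k : K) / (k + r).choose r = (n + r).choose (k + r) / (n + r).choose r := by
  have h := Nat.choose_mul (n := n + r) (k := k + r) (s := r) (by omega)
  rw [Nat.add_sub_cancel, Nat.add_sub_cancel] at h
  rw [div_eq_div_iff (by exact_mod_cast (Nat.choose_pos (by omega)).ne')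
    (by exact_mod_cast (Nat.choose_pos (by omega)).ne')]
  exact_mod_cast (h.trans (mul_comm _ _)).symm

lemma sum_range_neg_one_pow_mul_choose_div_choose (m r : ℕ) :
    ∑ k ∈ range m, (-1 : K) ^ k * m.choose (k + 1) / (k + 1 + r).choose r = m / (m + r) := by
  rcases Nat.eq_zero_or_pos m with rfl | hm
  · simp
  obtain ⟨M, hM⟩ : ∃ M, m + r = M + 1 := ⟨m + r - 1, by omega⟩
  have hc : ((M + 1).choose r : K) ≠ 0 := by exact_mod_cast (Nat.choose_pos (by omega)).ne'
  calc ∑ k ∈ range m, (-1 : K) ^ k * m.choose (k + 1) / (k + 1 + r).choose r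
      = (∑ k ∈ range m, (-1 : K) ^ k * (M + 1).choose (r + k + 1)) / (M + 1).choose r := by
        rw [sum_div]
        refine sum_congr rfl fun k hk => ?_
        rw [mul_div_assoc, choose_div_choose_add (by simp at hk; omega), hM, mul_div_assoc,
          show k + 1 + r = r + k + 1 by omega]
    _ = M.choose r / (M + 1).choose r := by
        rw [sum_range_neg_one_pow_mul_choose_succ, Nat.choose_eq_zero_of_lt (by omega : M < r + m)]
        simp
    _ = m / (m + r) := by
        have h := Nat.choose_mul_succ_eq M r
        rw [show M + 1 - r = m by omega] at h
        have hMr : (m : K) + r = M + 1 := by exact_mod_cast hM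
        rw [hMr, div_eq_div_iff hc (Nat.cast_add_one_ne_zero M), mul_comm (m : K)]
        exact_mod_cast h

end Field

lemma sum_range_neg_one_pow_mul_choose_div_mul_choose (r n : ℕ) :
    ∑ k ∈ range n, (-1 : ℝ) ^ k * n.choose (k + 1) / ((k + 1) * (k + 1 + r).choose r)
      = H (n + r) - H r := by
  induction n with
  | zero => simp
  | succ n ih =>
    have pascal : ∀ k ∈ range (n + 1),
        (-1 : ℝ) ^ k * (n + 1).choose (k + 1) / ((k + 1) * (k + 1 + r).choose r)
          = (-1 : ℝ) ^ k * n.choose (k + 1) / ((k + 1) * (k + 1 + r).choose r)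
            + (-1 : ℝ) ^ k * (n + 1).choose (k + 1) / (k + 1 + r).choose r / (n + 1) := by
      intro k _
      have absorb : ((n : ℝ) + 1) * n.choose k = (n + 1).choose (k + 1) * (k + 1) := by
        exact_mod_cast Nat.add_one_mul_choose_eq n k
      have hc : ((k + 1 + r).choose r : ℝ) ≠ 0 := by exact_mod_cast (Nat.choose_pos (by omega)).ne'
      have hp : ((n + 1).choose (k + 1) : ℝ) = n.choose k + n.choose (k + 1) := by
        exact_mod_cast Nat.choose_succ_succ' n k
      field_simp
      linear_combination ((n : ℝ) + 1) * hp + absorb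
    rw [sum_congr rfl pascal, sum_add_distrib, sum_range_succ, Nat.choose_succ_self, ← sum_div, ih,
      sum_range_neg_one_pow_mul_choose_div_choose, show n + 1 + r = n + r + 1 by omega, H_succ]
    push_cast
    field_simp
    ring

lemma sum_range_neg_one_pow_mul_choose_div_choose_mul_H {n r M : ℕ} (hM : n + r = M + 1) :
    ∑ k ∈ range n, (-1 : ℝ) ^ k * (n.choose (k + 1) / (k + 1 + r).choose r) * H (k + 1)
      = ∑ k ∈ range n, (-1 : ℝ) ^ k * M.choose (r + k) / (M + 1).choose r / (k + 1) := by
  set f : ℕ → ℝ := fun k => (-1) ^ k * M.choose (r + k) / (M + 1).choose r with hf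
  have telescope : ∀ k ∈ range n,
      (-1 : ℝ) ^ k * (n.choose (k + 1) / (k + 1 + r).choose r) * H (k + 1)
        = (f k - f (k + 1)) * H (k + 1) := by
    intro k hk
    have hp : ((M + 1).choose (r + k + 1) : ℝ) = M.choose (r + k) + M.choose (r + (k + 1)) := by
      exact_mod_cast Nat.choose_succ_succ' M (r + k)
    rw [choose_div_choose_add (by simp at hk; omega), hM, show k + 1 + r = r + k + 1 by omega, hp, hf]
    ring
  have hfn : f n = 0 := by simp [hf, Nat.choose_eq_zero_of_lt (by omega : M < r + n)]
  rw [sum_congr rfl telescope, sum_range_sub_mul_succ, hfn, H_zero]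
  simp only [H_succ, add_sub_cancel_left, mul_one_div, mul_zero, zero_mul, add_zero, sub_zero]
  rfl

lemma neg_one_pow_mul_choose_div_choose_div_succ {n r M k : ℕ} (hM : n + r = M + 1) (hk : k < n) :
    (-1 : ℝ) ^ k * M.choose (r + k) / (M + 1).choose r / (k + 1)
      = ((-1 : ℝ) ^ k * n.choose (k + 1) / (k + 1 + r).choose r
        + r * ((-1 : ℝ) ^ k * n.choose (k + 1) / ((k + 1) * (k + 1 + r).choose r))) / (n + r) := by
  have absorb : ((M : ℝ) + 1) * M.choose (r + k) = (M + 1).choose (r + k + 1) * (r + k + 1) := by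
    exact_mod_cast Nat.add_one_mul_choose_eq M (r + k)
  have hc : ((M + 1).choose r : ℝ) ≠ 0 := by exact_mod_cast (Nat.choose_pos (by omega)).ne'
  have hc' : ((k + 1 + r).choose r : ℝ) ≠ 0 := by exact_mod_cast (Nat.choose_pos (by omega)).ne'
  have hMr : (n : ℝ) + r = M + 1 := by exact_mod_cast hM
  have ratio : (n.choose (k + 1) : ℝ) = (M + 1).choose (r + k + 1) * (k + 1 + r).choose r
      / (M + 1).choose r := by
    rw [mul_div_right_comm, ← div_eq_iff hc', choose_div_choose_add (by omega), hM,
      show k + 1 + r = r + k + 1 by omega]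
  rw [ratio, hMr]
  field_simp
  linear_combination absorb

theorem stmt_6 (n : ℕ) (r : ℕ) (hr : 1 ≤ r) :
    ∑ k ∈ Icc 1 n, (-1 : ℝ) ^ (k - 1) * ((Nat.choose n k : ℝ) / (Nat.choose (k + r) r : ℝ)) * H k =
      ((r : ℝ) / ((n : ℝ) + r)) * (H (n + r) - H r) + (n : ℝ) / ((n : ℝ) + r) ^ 2 := by
  obtain ⟨M, hM⟩ : ∃ M, n + r = M + 1 := ⟨n + r - 1, by omega⟩
  calc _ = ∑ k ∈ range n, (-1 : ℝ) ^ k * (n.choose (k + 1) / (k + 1 + r).choose r) * H (k + 1) := by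
        rw [← Ico_add_one_right_eq_Icc, sum_Ico_eq_sum_range]
        exact sum_congr rfl fun k _ => by rw [add_comm 1 k, Nat.add_sub_cancel]
    _ = ∑ k ∈ range n, (-1 : ℝ) ^ k * M.choose (r + k) / (M + 1).choose r / (k + 1) :=
        sum_range_neg_one_pow_mul_choose_div_choose_mul_H hM
    _ = (n / (n + r) + r * (H (n + r) - H r)) / (n + r) := by
        rw [← sum_range_neg_one_pow_mul_choose_div_choose,
          ← sum_range_neg_one_pow_mul_choose_div_mul_choose, mul_sum, ← sum_add_distrib, sum_div]
        exact sum_congr rfl fun k hk => neg_one_pow_mul_choose_div_choose_div_succ hM (by simpa using hk)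
    _ = _ := by
        have : (n : ℝ) + r ≠ 0 := by exact_mod_cast (show n + r ≠ 0 by omega)
        field_simp
        ring
end

section
/- For every natural number n and all natural numbers r, s with 1 ≤ s ≤ r, ∑_{k=0}^{n} (−1)^k · 4^k · C(n+k, n−k) / ((k+s) · C(k+r, k+s)) = ∑_{k=0}^{n} (−1)^{n−k} · C(2n+1, 2k+1) / ((n−k+s) · C(n+r, n−k+s)), as an identity of real numbers. -/
/-!
Since `1 / ((k + s) * C(k + r, k + s)) = ∫₀¹ x ^ (k + s - 1) * (1 - x) ^ (r - s) dx`, both sides are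
integrals of `x ^ (s - 1) * (1 - x) ^ (r - s)` against a polynomial, and the two polynomials agree.
The left one is the Morgan–Voyce polynomial `b_n(-4x)`; the right one is
`((c + t) ^ (2n + 1) + (c - t) ^ (2n + 1)) / (2c)` with `c ^ 2 = 1 - x` and `t ^ 2 = -x`,
that is `cos ((2n + 1) θ) / cos θ` at `x = sin² θ`. Both satisfy
`f (n + 2) + f n = (2 - 4x) f (n + 1)` and have the same two initial values.
-/

open Finset intervalIntegral
open scoped Nat

theorem Nat.choose_add_two (m j : ℕ) :
    (m + 2).choose (j + 2) = m.choose j + 2 * m.choose (j + 1) + m.choose (j + 2) := by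
  rw [Nat.choose_succ_succ' (m + 1) (j + 1), Nat.choose_succ_succ' m j,
    Nat.choose_succ_succ' m (j + 1)]
  ring

theorem Nat.choose_add_two_add_choose (m j : ℕ) :
    (m + 2).choose (j + 2) + m.choose (j + 2) = 2 * (m + 1).choose (j + 2) + m.choose j := by
  rw [Nat.choose_add_two, Nat.choose_succ_succ' m (j + 1)]
  ring

section CommSemiring

variable {R : Type*} [CommSemiring R]

def morganVoyce (n : ℕ) (y : R) : R :=
  ∑ k ∈ range (n + 1), ((n + k).choose (2 * k) : R) * y ^ k

theorem morganVoyce_zero (y : R) : morganVoyce 0 y = 1 := by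
  simp [morganVoyce]

theorem morganVoyce_one (y : R) : morganVoyce 1 y = 1 + y := by
  simp [morganVoyce, sum_range_succ]

theorem morganVoyce_eq_sum_choose_sub (n : ℕ) (y : R) :
    morganVoyce n y = ∑ k ∈ range (n + 1), ((n + k).choose (n - k) : R) * y ^ k := by
  refine sum_congr rfl fun k hk => ?_
  have hk : k ≤ n := mem_range_succ_iff.1 hk
  rw [Nat.choose_symm_of_eq_add (show n + k = 2 * k + (n - k) by omega)]

theorem morganVoyce_eq_one_add_sum {n N : ℕ} (h : n ≤ N) (y : R) :
    morganVoyce n y =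
      1 + ∑ k ∈ range N, ((n + (k + 1)).choose (2 * (k + 1)) : R) * y ^ (k + 1) := by
  have hN : morganVoyce n y = ∑ k ∈ range (N + 1), ((n + k).choose (2 * k) : R) * y ^ k := by
    refine sum_subset (range_subset_range.2 (by omega)) fun k _ hk => ?_
    rw [Nat.choose_eq_zero_of_lt (by rw [mem_range] at hk; omega), Nat.cast_zero, zero_mul]
  rw [hN, sum_range_succ', add_comm]
  simp

theorem morganVoyce_add_two (n : ℕ) (y : R) :
    morganVoyce (n + 2) y + morganVoyce n y = (2 + y) * morganVoyce (n + 1) y := by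
  have hy : y * morganVoyce (n + 1) y =
      ∑ k ∈ range (n + 2), ((n + 1 + k).choose (2 * k) : R) * y ^ (k + 1) := by
    simp only [morganVoyce, mul_sum, pow_succ]
    exact sum_congr rfl fun k _ => by ring
  have hpascal : ∑ k ∈ range (n + 2), (((n + 2 + (k + 1)).choose (2 * (k + 1)) : R) * y ^ (k + 1) +
      ((n + (k + 1)).choose (2 * (k + 1)) : R) * y ^ (k + 1)) =
      ∑ k ∈ range (n + 2), (2 * (((n + 1 + (k + 1)).choose (2 * (k + 1)) : R) * y ^ (k + 1)) +
        ((n + 1 + k).choose (2 * k) : R) * y ^ (k + 1)) := by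
    refine sum_congr rfl fun k _ => ?_
    rw [← mul_assoc, ← add_mul, ← add_mul]
    congr 1
    convert congrArg (Nat.cast : ℕ → R) (Nat.choose_add_two_add_choose (n + k + 1) (2 * k))
      using 3 <;> push_cast <;> ring_nf
  rw [add_mul, hy, morganVoyce_eq_one_add_sum (n := n + 2) le_rfl,
    morganVoyce_eq_one_add_sum (n := n) (N := n + 2) (by omega),
    morganVoyce_eq_one_add_sum (n := n + 1) (N := n + 2) (by omega)]
  simp only [sum_add_distrib, ← mul_sum] at hpascal
  rw [add_add_add_comm, hpascal]
  ring

theorem sum_antidiagonal_succ_pow_mul_pow (f : ℕ → R) (n : ℕ) (a b : R) :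
    ∑ p ∈ antidiagonal (n + 1), f p.1 * a ^ p.1 * b ^ p.2 =
      f 0 * b ^ (n + 1) + a * ∑ p ∈ antidiagonal n, f (p.1 + 1) * a ^ p.1 * b ^ p.2 := by
  rw [Nat.sum_antidiagonal_succ, mul_sum]
  simp only [pow_zero, mul_one, pow_succ]
  congr 1
  exact sum_congr rfl fun p _ => by ring

theorem mul_sum_antidiagonal_pow_mul_pow {f : ℕ → R} {n : ℕ} (hf : f (n + 1) = 0) (a b : R) :
    b * ∑ p ∈ antidiagonal n, f p.1 * a ^ p.1 * b ^ p.2 =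
      f 0 * b ^ (n + 1) + a * ∑ p ∈ antidiagonal n, f (p.1 + 1) * a ^ p.1 * b ^ p.2 := by
  rw [← sum_antidiagonal_succ_pow_mul_pow, Nat.sum_antidiagonal_succ', hf, mul_sum]
  simp only [zero_mul, zero_add, pow_succ]
  exact sum_congr rfl fun p _ => by ring

/-- With `a = t ^ 2` and `b = c ^ 2`, the binomial expansion splits as
`(c + t) ^ (2 * n + 1) = c * evenBinomialSum n a b + t * oddBinomialSum n a b`. -/
def evenBinomialSum (n : ℕ) (a b : R) : R :=
  ∑ p ∈ antidiagonal n, ((2 * n + 1).choose (2 * p.1) : R) * a ^ p.1 * b ^ p.2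

def oddBinomialSum (n : ℕ) (a b : R) : R :=
  ∑ p ∈ antidiagonal n, ((2 * n + 1).choose (2 * p.1 + 1) : R) * a ^ p.1 * b ^ p.2

theorem evenBinomialSum_zero (a b : R) : evenBinomialSum 0 a b = 1 := by
  simp [evenBinomialSum]

theorem evenBinomialSum_one (a b : R) : evenBinomialSum 1 a b = b + 3 * a := by
  simp [evenBinomialSum, Nat.antidiagonal_succ]

theorem evenBinomialSum_eq_sum_range (n : ℕ) (a b : R) :
    evenBinomialSum n a b =
      ∑ k ∈ range (n + 1), ((2 * n + 1).choose (2 * k + 1) : R) * a ^ (n - k) * b ^ k := by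
  rw [evenBinomialSum, ← Nat.sum_antidiagonal_swap, Nat.sum_antidiagonal_eq_sum_range_succ_mk]
  refine sum_congr rfl fun k hk => ?_
  have hk : k ≤ n := mem_range_succ_iff.1 hk
  rw [Prod.swap_prod_mk,
    Nat.choose_symm_of_eq_add (show 2 * n + 1 = 2 * (n - k) + (2 * k + 1) by omega)]

theorem evenBinomialSum_succ (n : ℕ) (a b : R) :
    evenBinomialSum (n + 1) a b =
      (a + b) * evenBinomialSum n a b + 2 * a * oddBinomialSum n a b := by
  have hpascal (i : ℕ) : ((2 * (n + 1) + 1).choose (2 * (i + 1)) : R) =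
      (2 * n + 1).choose (2 * i) + 2 * (2 * n + 1).choose (2 * i + 1) +
        (2 * n + 1).choose (2 * (i + 1)) := by
    have h := Nat.choose_add_two (2 * n + 1) (2 * i)
    rw [show 2 * n + 1 + 2 = 2 * (n + 1) + 1 by ring, show 2 * i + 2 = 2 * (i + 1) by ring] at h
    rw [h]
    push_cast
    ring
  rw [evenBinomialSum, evenBinomialSum, oddBinomialSum,
    sum_antidiagonal_succ_pow_mul_pow (fun i => ((2 * (n + 1) + 1).choose (2 * i) : R)), add_mul,
    mul_sum_antidiagonal_pow_mul_pow (f := fun i => ((2 * n + 1).choose (2 * i) : R))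
      (by rw [Nat.choose_eq_zero_of_lt (by omega), Nat.cast_zero])]
  simp only [hpascal, add_mul, sum_add_distrib, mul_assoc, ← mul_sum]
  simp only [mul_zero, Nat.choose_zero_right, Nat.cast_one]
  ring

theorem oddBinomialSum_succ (n : ℕ) (a b : R) :
    oddBinomialSum (n + 1) a b =
      (a + b) * oddBinomialSum n a b + 2 * b * evenBinomialSum n a b := by
  have hpascal (i : ℕ) : ((2 * (n + 1) + 1).choose (2 * (i + 1) + 1) : R) =
      (2 * n + 1).choose (2 * i + 1) + 2 * (2 * n + 1).choose (2 * (i + 1)) +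
        (2 * n + 1).choose (2 * (i + 1) + 1) := by
    have h := Nat.choose_add_two (2 * n + 1) (2 * i + 1)
    rw [show 2 * n + 1 + 2 = 2 * (n + 1) + 1 by ring, show 2 * i + 1 + 2 = 2 * (i + 1) + 1 by ring,
      show 2 * i + 1 + 1 = 2 * (i + 1) by ring] at h
    rw [h]
    push_cast
    ring
  rw [oddBinomialSum, oddBinomialSum, evenBinomialSum,
    sum_antidiagonal_succ_pow_mul_pow (fun i => ((2 * (n + 1) + 1).choose (2 * i + 1) : R)),
    add_mul, mul_sum_antidiagonal_pow_mul_pow (f := fun i => ((2 * n + 1).choose (2 * i + 1) : R))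
      (by rw [Nat.choose_eq_zero_of_lt (by omega), Nat.cast_zero]), mul_assoc,
    mul_sum_antidiagonal_pow_mul_pow (f := fun i => ((2 * n + 1).choose (2 * i) : R))
      (by rw [Nat.choose_eq_zero_of_lt (by omega), Nat.cast_zero])]
  simp only [hpascal, add_mul, sum_add_distrib, mul_assoc, ← mul_sum]
  simp only [mul_zero, zero_add, Nat.choose_zero_right, Nat.choose_one_right]
  push_cast
  ring

end CommSemiring

theorem eq_of_add_two_add_eq_mul {R : Type*} [Semiring R] [IsRightCancelAdd R] (c : R) {u v : ℕ → R}
    (hu : ∀ n, u (n + 2) + u n = c * u (n + 1)) (hv : ∀ n, v (n + 2) + v n = c * v (n + 1))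
    (h0 : u 0 = v 0) (h1 : u 1 = v 1) : u = v := by
  funext n
  induction n using Nat.twoStepInduction with
  | zero => exact h0
  | one => exact h1
  | more n hn hn' => exact add_right_cancel ((hu n).trans (by rw [hn', hn, hv n]))

section CommRing

variable {R : Type*} [CommRing R]

theorem evenBinomialSum_add_two (n : ℕ) (a b : R) :
    evenBinomialSum (n + 2) a b + (b - a) ^ 2 * evenBinomialSum n a b =
      2 * (a + b) * evenBinomialSum (n + 1) a b := by
  linear_combination evenBinomialSum_succ (n + 1) a b + 2 * a * oddBinomialSum_succ n a b -
    (a + b) * evenBinomialSum_succ n a b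

theorem morganVoyce_four_mul (n : ℕ) (a : R) :
    morganVoyce n (4 * a) = evenBinomialSum n a (a + 1) := by
  refine congrFun (eq_of_add_two_add_eq_mul (2 + 4 * a) (u := fun n => morganVoyce n (4 * a))
    (v := fun n => evenBinomialSum n a (a + 1))
    (fun n => morganVoyce_add_two n _) (fun n => ?_) ?_ ?_) n
  · linear_combination evenBinomialSum_add_two n a (a + 1)
  · exact (morganVoyce_zero _).trans (evenBinomialSum_zero _ _).symm
  · simp only [morganVoyce_one, evenBinomialSum_one]
    ring

theorem sum_choose_mul_pow_eq_sum_choose_mul_pow_mul_pow (n : ℕ) (x : R) :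
    ∑ k ∈ range (n + 1), (-1 : R) ^ k * 4 ^ k * ((n + k).choose (n - k) : R) * x ^ k =
      ∑ k ∈ range (n + 1),
        (-1 : R) ^ (n - k) * ((2 * n + 1).choose (2 * k + 1) : R) * x ^ (n - k) * (1 - x) ^ k := by
  have h := morganVoyce_four_mul n (-x)
  rw [morganVoyce_eq_sum_choose_sub, evenBinomialSum_eq_sum_range, neg_add_eq_sub] at h
  convert h using 2 with k _ k _
  · rw [mul_pow, neg_pow]
    ring
  · rw [neg_pow]
    ring

end CommRing

theorem integral_pow_mul_one_sub_pow (i j : ℕ) :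
    ∫ x in (0 : ℝ)..1, x ^ i * (1 - x) ^ j = (i ! * j ! : ℝ) / (i + j + 1)! := by
  induction j generalizing i with
  | zero =>
    simp only [pow_zero, mul_one, integral_pow, one_pow, zero_pow (Nat.succ_ne_zero i), sub_zero,
      Nat.factorial_zero, add_zero, Nat.factorial_succ]
    push_cast
    field_simp
  | succ j ih =>
    have hsplit (x : ℝ) :
        x ^ i * (1 - x) ^ (j + 1) = x ^ i * (1 - x) ^ j - x ^ (i + 1) * (1 - x) ^ j := by
      ring
    simp_rw [hsplit]
    rw [integral_sub (by apply Continuous.intervalIntegrable; fun_prop)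
      (by apply Continuous.intervalIntegrable; fun_prop), ih, ih,
      show i + 1 + j + 1 = i + j + 1 + 1 by ring, show i + (j + 1) + 1 = i + j + 1 + 1 by ring]
    simp only [Nat.factorial_succ]
    push_cast
    field_simp
    ring

theorem integral_pow_mul_one_sub_pow_eq_inv (i j : ℕ) :
    ∫ x in (0 : ℝ)..1, x ^ i * (1 - x) ^ j =
      (((i + 1 : ℕ) : ℝ) * (i + j + 1).choose (i + 1))⁻¹ := by
  have h := Nat.choose_mul_factorial_mul_factorial (show i + 1 ≤ i + j + 1 by omega)
  rw [show i + j + 1 - (i + 1) = j by omega, Nat.factorial_succ] at h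
  rw [integral_pow_mul_one_sub_pow, ← h]
  push_cast
  field_simp

theorem sum_div_choose_eq_integral {ι : Type*} (t : Finset ι) (c d : ι → ℝ) (e f : ι → ℕ) (a b : ℕ)
    (hd : ∀ i ∈ t, d i = ((e i + a + 1 : ℕ) : ℝ) * (e i + f i + a + b + 1).choose (e i + a + 1)) :
    ∑ i ∈ t, c i / d i =
      ∫ x in (0 : ℝ)..1, x ^ a * (1 - x) ^ b * ∑ i ∈ t, c i * x ^ e i * (1 - x) ^ f i := by
  simp only [mul_sum]
  rw [integral_finsetSum fun i _ => by apply Continuous.intervalIntegrable; fun_prop]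
  refine sum_congr rfl fun i hi => ?_
  rw [hd i hi, div_eq_mul_inv, show e i + f i + a + b + 1 = (e i + a) + (f i + b) + 1 by ring,
    ← integral_pow_mul_one_sub_pow_eq_inv, ← integral_const_mul]
  refine integral_congr fun x _ => ?_
  simp only [pow_add]
  ring

theorem stmt_17 (n : ℕ) (r s : ℕ) (hs : 1 ≤ s) (hsr : s ≤ r) :
    ∑ k ∈ range (n + 1),
        (-1 : ℝ) ^ k * 4 ^ k * (Nat.choose (n + k) (n - k) : ℝ) /
          (((k : ℝ) + s) * (Nat.choose (k + r) (k + s) : ℝ)) =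
      ∑ k ∈ range (n + 1),
        (-1 : ℝ) ^ (n - k) * (Nat.choose (2 * n + 1) (2 * k + 1) : ℝ) /
          (((n : ℝ) - (k : ℝ) + s) * (Nat.choose (n + r) (n - k + s) : ℝ)) := by
  obtain ⟨a, rfl⟩ : ∃ a, s = a + 1 := ⟨s - 1, by omega⟩
  obtain ⟨b, rfl⟩ : ∃ b, r = a + 1 + b := ⟨r - (a + 1), by omega⟩
  rw [sum_div_choose_eq_integral _ _ _ (fun k => k) (fun _ => 0) a b fun k _ => by
      rw [show k + (a + 1 + b) = k + 0 + a + b + 1 by omega, show k + (a + 1) = k + a + 1 by omega]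
      push_cast
      ring,
    sum_div_choose_eq_integral _ _ _ (fun k => n - k) (fun k => k) a b fun k hk => by
      have hk : k ≤ n := mem_range_succ_iff.1 hk
      rw [show n + (a + 1 + b) = n - k + k + a + b + 1 by omega,
        show n - k + (a + 1) = n - k + a + 1 by omega]
      push_cast [hk]
      ring]
  simp only [pow_zero, mul_one, sum_choose_mul_pow_eq_sum_choose_mul_pow_mul_pow]
end
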